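/- arXiv:2412.01763 — 4 statements merged into one kernel-verified Lean document; each statement's English description precedes it below -/
import Mathlib

section
/- Suppose G⁻(λ) < ρ. Then the minimax risk equals Δ = h·(b − (b+h)·G⁻(λ))·(M − λ) / ((b+h)·(1 − G⁻(λ))), this value is nonnegative, and the infimum defining Δ is attained at the unidentifiable ordering quantity q†_G, which lies in the interval [λ, M]; that is, Regret(q†_G) = Δ. -/
/-!
For `F` agreeing with `G` below `λ`, Fubini gives
`C_F(q) - C_F(s) = (b + h) ∫ₛ^q F(t) dt - b (q - s)`. Since `q⋆_F ∈ [λ, M]` and `F ≥ G⁻(λ)` on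
`[λ, ∞)`, an order `q ≥ λ` loses at most `h (q - λ)` (if `q⋆_F ≤ q`) or
`(b - (b + h) G⁻(λ)) (M - q)` (if `q < q⋆_F`). Both bounds are attained, by the distributions
`Fp` that put all the unobserved mass `1 - G⁻(λ)` at `λ`, resp. at `M`. So the worst-case regret
is at least the maximum of an increasing and a decreasing linear function of `q`, with equality
on `[λ, M]`, and `q†_G` is where the two lines cross.
-/

open MeasureTheory Set

/-- Newsvendor cost of ordering quantity `q` under demand distribution `F`,
with underage cost `b` and overage cost `h`. -/
noncomputable def nvCost (b h : ℝ) (F : Measure ℝ) (q : ℝ) : ℝ :=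
  ∫ x, (b * max (x - q) 0 + h * max (q - x) 0) ∂F

/-- Optimal newsvendor quantity: the `ρ`-th quantile of `F`. -/
noncomputable def qStar (ρ : ℝ) (F : Measure ℝ) : ℝ :=
  sInf {q : ℝ | ρ ≤ (F (Iic q)).toReal}

/-- The set `𝒢` of admissible demand distributions: Borel probability measures on ℝ
supported on `[0, ∞)` with finite mean and optimal newsvendor quantity at most `M`. -/
def GoodDist (ρ M : ℝ) : Set (Measure ℝ) :=
  {F | IsProbabilityMeasure F ∧ F (Iio 0) = 0 ∧ Integrable id F ∧ qStar ρ F ≤ M}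

/-- The ambiguity set `𝒜_λ`: all admissible distributions agreeing with `G` before `lam`. -/
def Ambig (ρ M : ℝ) (G : Measure ℝ) (lam : ℝ) : Set (Measure ℝ) :=
  {F | F ∈ GoodDist ρ M ∧ ∀ x < lam, F (Iic x) = G (Iic x)}

/-- Worst-case regret of an ordering quantity `q` over the ambiguity set. -/
noncomputable def Regret (b h ρ M : ℝ) (G : Measure ℝ) (lam q : ℝ) : ℝ :=
  sSup ((fun F => nvCost b h F q - nvCost b h F (qStar ρ F)) '' Ambig ρ M G lam)

/-- Minimax risk `Δ`. -/
noncomputable def Risk (b h ρ M : ℝ) (G : Measure ℝ) (lam : ℝ) : ℝ :=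
  sInf (Regret b h ρ M G lam '' Icc 0 M)

/-- The unidentifiable ordering quantity `q†_G`. -/
noncomputable def qDagger (b h M : ℝ) (G : Measure ℝ) (lam : ℝ) : ℝ :=
  (b * M + h * lam - (b + h) * (G (Iio lam)).toReal * M) /
    ((b + h) * (1 - (G (Iio lam)).toReal))

/-- The two-point-tail distribution `F_p`: agrees with `G` on `[0, λ)`, places an atom
of mass `p` at `λ` and an atom of mass `1 - p - G⁻(λ)` at `M`. -/
noncomputable def Fp (G : Measure ℝ) (lam M p : ℝ) : Measure ℝ :=
  G.restrict (Iio lam) + ENNReal.ofReal p • Measure.dirac lam +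
    ENNReal.ofReal (1 - p - (G (Iio lam)).toReal) • Measure.dirac M

/-- The `N`-fold product (i.i.d.) measure of `G` (equal to `Measure.pi` whenever `G`
is sigma-finite, in particular for probability measures). -/
noncomputable def iidPi (N : ℕ) (G : Measure ℝ) : Measure (Fin N → ℝ) := by
  classical
  exact if h : SigmaFinite G then
    haveI := h
    Measure.pi fun _ => G
  else 0

open ProbabilityTheory

section Quantile

variable {F : Measure ℝ} [IsProbabilityMeasure F] {ρ : ℝ}

lemma qStar_eq_sInf_cdf : qStar ρ F = sInf {q | ρ ≤ cdf F q} := by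
  simp only [qStar, cdf_eq_real, measureReal_def]

lemma qStar_le_of_le_cdf (hρ : 0 < ρ) {c : ℝ} (hc : ρ ≤ cdf F c) : qStar ρ F ≤ c := by
  obtain ⟨a, ha⟩ := Filter.eventually_atBot.1 ((tendsto_cdf_atBot F).eventually_lt_const hρ)
  rw [qStar_eq_sInf_cdf]
  exact csInf_le ⟨a, fun q hq => le_of_not_ge fun hqa => (ha q hqa).not_ge hq⟩ hc

lemma le_qStar_of_cdf_lt (hρ : ρ < 1) {c : ℝ} (hc : ∀ t < c, cdf F t < ρ) : c ≤ qStar ρ F := by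
  obtain ⟨q, hq⟩ := ((tendsto_cdf_atTop F).eventually_const_lt hρ).exists
  rw [qStar_eq_sInf_cdf]
  exact le_csInf ⟨q, hq.le⟩ fun q hq => le_of_not_gt fun hqc => (hc q hqc).not_ge hq

lemma qStar_nonneg (hρ0 : 0 < ρ) (hρ1 : ρ < 1) (hF0 : F (Iio 0) = 0) : 0 ≤ qStar ρ F :=
  le_qStar_of_cdf_lt hρ1 fun t ht => by
    rwa [cdf_eq_real, measureReal_def, measure_mono_null (Iic_subset_Iio.2 ht) hF0,
      ENNReal.toReal_zero]

end Quantile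

section CostDifference

variable {F : Measure ℝ} [IsProbabilityMeasure F] {b h s q : ℝ}

lemma volume_real_Ici_inter_Ioc (hsq : s ≤ q) (x : ℝ) :
    volume.real (Ici x ∩ Ioc s q) = max q x - max s x := by
  rw [inter_comm, measureReal_congr ((ae_eq_refl _).inter Ioi_ae_eq_Ici.symm), Ioc_inter_Ioi,
    Real.volume_real_Ioc]
  rcases le_total x s with hxs | hsx
  · simp [hxs, hxs.trans hsq, hsq]
  · rcases le_total x q with hxq | hqx
    · simp [hxq, hsx]
    · simp [hqx, hsx]

/-- Fubini for the indicator of `{(t, x) | x ≤ t}` over `(s, q] × ℝ`. -/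
lemma integral_max_sub_max (hsq : s ≤ q) :
    ∫ x, (max q x - max s x) ∂F = ∫ t in s..q, cdf F t := by
  set S := {p : ℝ × ℝ | p.2 ≤ p.1}
  have hS : MeasurableSet S := measurableSet_le measurable_snd measurable_fst
  have hint : Integrable (Function.uncurry fun t x => S.indicator (1 : ℝ × ℝ → ℝ) (t, x))
      ((volume.restrict (Ioc s q)).prod F) :=
    (integrable_const (1 : ℝ)).indicator hS
  rw [intervalIntegral.integral_of_le hsq]
  calc ∫ x, (max q x - max s x) ∂F
        = ∫ x, (∫ t in Ioc s q, S.indicator (1 : ℝ × ℝ → ℝ) (t, x)) ∂F := by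
        refine integral_congr_ae (Filter.Eventually.of_forall fun x => ?_)
        have : (fun t => S.indicator (1 : ℝ × ℝ → ℝ) (t, x)) = (Ici x).indicator 1 := by
          ext t; simp [S, indicator_apply]
        simp only [this, integral_indicator_one measurableSet_Ici,
          measureReal_restrict_apply measurableSet_Ici, volume_real_Ici_inter_Ioc hsq]
    _ = ∫ t in Ioc s q, ∫ x, S.indicator (1 : ℝ × ℝ → ℝ) (t, x) ∂F :=
        (integral_integral_swap hint).symm
    _ = ∫ t in Ioc s q, cdf F t := by
        refine integral_congr_ae (Filter.Eventually.of_forall fun t => ?_)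
        have : (fun x => S.indicator (1 : ℝ × ℝ → ℝ) (t, x)) = (Iic t).indicator 1 := by
          ext x; simp [S, indicator_apply]
        simp only [this, integral_indicator_one measurableSet_Iic, cdf_eq_real]

lemma newsvendor_loss_eq (b h q x : ℝ) :
    b * max (x - q) 0 + h * max (q - x) 0 = (b + h) * max q x - b * q - h * x := by
  rcases le_total x q with hxq | hqx
  · simp [hxq]; ring
  · simp [hqx]; ring

lemma nvCost_eq (hF : Integrable id F) (q : ℝ) :
    nvCost b h F q = (b + h) * (∫ x, max q x ∂F) - b * q - h * ∫ x, x ∂F := by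
  simp only [nvCost, newsvendor_loss_eq]
  have hmax : Integrable (fun x => max q x) F := (integrable_const q).sup hF
  rw [integral_sub (f := fun x => (b + h) * max q x - b * q) (g := fun x => h * x)
      ((hmax.const_mul _).sub (integrable_const _)) (hF.const_mul h),
    integral_sub (hmax.const_mul _) (integrable_const _), integral_const_mul, integral_const_mul,
    integral_const_mul, integral_const, probReal_univ, one_smul]

lemma nvCost_sub_nvCost (hF : Integrable id F) (hsq : s ≤ q) :
    nvCost b h F q - nvCost b h F s = (b + h) * (∫ t in s..q, cdf F t) - b * (q - s) := by
  rw [nvCost_eq hF, nvCost_eq hF, ← integral_max_sub_max hsq,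
    integral_sub (f := fun x => max q x) (g := fun x => max s x)
      ((integrable_const q).sup hF) ((integrable_const s).sup hF)]
  ring

lemma nvCost_sub_nvCost_le (hbh : 0 ≤ b + h) (hF : Integrable id F) (hsq : s ≤ q) {C : ℝ}
    (hC : ∀ t ∈ Ioo s q, cdf F t ≤ C) :
    nvCost b h F q - nvCost b h F s ≤ ((b + h) * C - b) * (q - s) := by
  have := intervalIntegral.integral_mono_on_of_le_Ioo hsq (monotone_cdf F).intervalIntegrable
    (intervalIntegrable_const (μ := volume)) hC
  rw [intervalIntegral.integral_const, smul_eq_mul] at this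
  rw [nvCost_sub_nvCost hF hsq]
  nlinarith [mul_le_mul_of_nonneg_left this hbh]

lemma le_nvCost_sub_nvCost (hbh : 0 ≤ b + h) (hF : Integrable id F) (hsq : s ≤ q) {c : ℝ}
    (hc : ∀ t ∈ Ioo s q, c ≤ cdf F t) :
    ((b + h) * c - b) * (q - s) ≤ nvCost b h F q - nvCost b h F s := by
  have := intervalIntegral.integral_mono_on_of_le_Ioo hsq (intervalIntegrable_const (μ := volume))
    (monotone_cdf F).intervalIntegrable hc
  rw [intervalIntegral.integral_const, smul_eq_mul] at this
  rw [nvCost_sub_nvCost hF hsq]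
  nlinarith [mul_le_mul_of_nonneg_left this hbh]

lemma nvCost_sub_nvCost_le_mul_abs (hb : 0 ≤ b) (hh : 0 ≤ h) (hF : Integrable id F) (q s : ℝ) :
    nvCost b h F q - nvCost b h F s ≤ max b h * |q - s| := by
  rcases le_total s q with hsq | hqs
  · have := nvCost_sub_nvCost_le (add_nonneg hb hh) hF hsq fun t _ => cdf_le_one F t
    rw [abs_of_nonneg (sub_nonneg.2 hsq)]
    nlinarith [le_max_right b h]
  · have := le_nvCost_sub_nvCost (add_nonneg hb hh) hF hqs fun t _ => cdf_nonneg F t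
    rw [abs_of_nonpos (sub_nonpos.2 hqs)]
    nlinarith [le_max_left b h]

end CostDifference

lemma measure_Iio_eq_of_forall_lt {μ ν : Measure ℝ} {a : ℝ}
    (h : ∀ x < a, μ (Iic x) = ν (Iic x)) : μ (Iio a) = ν (Iio a) := by
  obtain ⟨u, hu_mono, hu_lt, hu_lim⟩ := exists_seq_strictMono_tendsto a
  have hmono : Monotone fun n => Iic (u n) := monotone_Iic.comp hu_mono.monotone
  rw [← iUnion_Iic_eq_Iio_of_lt_of_tendsto hu_lt hu_lim, hmono.measure_iUnion,
    hmono.measure_iUnion]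
  simp only [h _ (hu_lt _)]

section Agreement

variable {ρ lam : ℝ} {F G : Measure ℝ} [IsProbabilityMeasure F]

lemma cdf_lt_of_forall_lt (hFG : ∀ x < lam, F (Iic x) = G (Iic x))
    (hcen : (G (Iio lam)).toReal < ρ) {t : ℝ} (ht : t < lam) : cdf F t < ρ := by
  rw [← measure_Iio_eq_of_forall_lt hFG] at hcen
  rw [cdf_eq_real]
  exact (measureReal_mono (Iic_subset_Iio.2 ht)).trans_lt hcen

lemma le_cdf_of_forall_lt (hFG : ∀ x < lam, F (Iic x) = G (Iic x)) {t : ℝ} (ht : lam ≤ t) :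
    (G (Iio lam)).toReal ≤ cdf F t := by
  rw [cdf_eq_real, ← measure_Iio_eq_of_forall_lt hFG]
  exact measureReal_mono (Iio_subset_Iic ht)

lemma le_qStar_of_forall_lt (hρ : ρ < 1) (hFG : ∀ x < lam, F (Iic x) = G (Iic x))
    (hcen : (G (Iio lam)).toReal < ρ) : lam ≤ qStar ρ F :=
  le_qStar_of_cdf_lt hρ fun _ => cdf_lt_of_forall_lt hFG hcen

end Agreement

section TwoPointTail

variable {G : Measure ℝ} {lam M p : ℝ}

lemma Fp_apply_Iic (t : ℝ) :
    Fp G lam M p (Iic t) = G (Iic t ∩ Iio lam)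
      + (if lam ≤ t then ENNReal.ofReal p else 0)
      + (if M ≤ t then ENNReal.ofReal (1 - p - (G (Iio lam)).toReal) else 0) := by
  simp [Fp, Measure.restrict_apply measurableSet_Iic, Measure.dirac_apply' _ measurableSet_Iic,
    indicator_apply]

lemma ofReal_add_add_eq_one [IsFiniteMeasure G] (hp0 : 0 ≤ p)
    (hp1 : p ≤ 1 - (G (Iio lam)).toReal) :
    G (Iio lam) + ENNReal.ofReal p + ENNReal.ofReal (1 - p - (G (Iio lam)).toReal) = 1 := by
  nth_rewrite 1 [← ENNReal.ofReal_toReal (measure_ne_top G (Iio lam))]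
  rw [← ENNReal.ofReal_add ENNReal.toReal_nonneg hp0,
    ← ENNReal.ofReal_add (by positivity) (by linarith [hp1])]
  convert ENNReal.ofReal_one using 2
  ring

lemma isProbabilityMeasure_Fp [IsFiniteMeasure G] (hp0 : 0 ≤ p)
    (hp1 : p ≤ 1 - (G (Iio lam)).toReal) :
    IsProbabilityMeasure (Fp G lam M p) := by
  constructor
  simpa [Fp] using ofReal_add_add_eq_one hp0 hp1

lemma Fp_Iic_of_lt (hlamM : lam ≤ M) {t : ℝ} (ht : t < lam) : Fp G lam M p (Iic t) = G (Iic t) := by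
  rw [Fp_apply_Iic, if_neg ht.not_ge, if_neg (ht.trans_le hlamM).not_ge,
    inter_eq_left.2 (Iic_subset_Iio.2 ht), add_zero, add_zero]

lemma toReal_Fp_Iic_of_le_of_lt [IsFiniteMeasure G] (hp0 : 0 ≤ p) {t : ℝ} (ht : lam ≤ t)
    (htM : t < M) :
    (Fp G lam M p (Iic t)).toReal = (G (Iio lam)).toReal + p := by
  rw [Fp_apply_Iic, if_pos ht, if_neg htM.not_ge, inter_eq_right.2 (Iio_subset_Iic ht), add_zero,
    ENNReal.toReal_add (measure_ne_top _ _) ENNReal.ofReal_ne_top, ENNReal.toReal_ofReal hp0]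

lemma Fp_Iic_of_le [IsFiniteMeasure G] (hp0 : 0 ≤ p) (hp1 : p ≤ 1 - (G (Iio lam)).toReal)
    (hlamM : lam ≤ M) {t : ℝ} (ht : M ≤ t) : Fp G lam M p (Iic t) = 1 := by
  rw [Fp_apply_Iic, if_pos (hlamM.trans ht), if_pos ht,
    inter_eq_right.2 (Iio_subset_Iic (hlamM.trans ht)), ofReal_add_add_eq_one hp0 hp1]

lemma Fp_Iio_zero (hG0 : G (Iio 0) = 0) (hlam : 0 ≤ lam) (hlamM : lam ≤ M) :
    Fp G lam M p (Iio 0) = 0 := by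
  simp [Fp, Measure.restrict_apply measurableSet_Iio, Measure.dirac_apply' _ measurableSet_Iio,
    min_eq_left hlam, hG0, hlam.not_gt, (hlam.trans hlamM).not_gt]

lemma integrable_id_Fp (hG : Integrable id G) : Integrable id (Fp G lam M p) := by
  have hdirac (a : ℝ) : Integrable id (Measure.dirac a) :=
    (integrable_const a).congr (ae_eq_dirac' measurable_id).symm
  exact (hG.restrict.add_measure ((hdirac lam).smul_measure ENNReal.ofReal_ne_top)).add_measure
    ((hdirac M).smul_measure ENNReal.ofReal_ne_top)

end TwoPointTail

section ExtremalTails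

variable {ρ M lam : ℝ} {G : Measure ℝ} [IsProbabilityMeasure G]

instance : IsProbabilityMeasure (Fp G lam M 0) :=
  isProbabilityMeasure_Fp le_rfl (sub_nonneg.2 measureReal_le_one)

instance : IsProbabilityMeasure (Fp G lam M (1 - (G (Iio lam)).toReal)) :=
  isProbabilityMeasure_Fp (sub_nonneg.2 measureReal_le_one) le_rfl

lemma Fp_mem_ambig (hG : G ∈ GoodDist ρ M) (hlam : 0 ≤ lam) (hlamM : lam ≤ M) {p : ℝ}
    (hp0 : 0 ≤ p) (hp1 : p ≤ 1 - (G (Iio lam)).toReal) (hq : qStar ρ (Fp G lam M p) ≤ M) :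
    Fp G lam M p ∈ Ambig ρ M G lam :=
  ⟨⟨isProbabilityMeasure_Fp hp0 hp1, Fp_Iio_zero hG.2.1 hlam hlamM, integrable_id_Fp hG.2.2.1, hq⟩,
    fun _ => Fp_Iic_of_lt hlamM⟩

lemma cdf_Fp_one_sub (hlamM : lam ≤ M) {t : ℝ} (ht : lam ≤ t) :
    cdf (Fp G lam M (1 - (G (Iio lam)).toReal)) t = 1 := by
  have hp0 : 0 ≤ 1 - (G (Iio lam)).toReal := sub_nonneg.2 measureReal_le_one
  rw [cdf_eq_real, measureReal_def]
  rcases lt_or_ge t M with htM | htM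
  · rw [toReal_Fp_Iic_of_le_of_lt hp0 ht htM, add_sub_cancel]
  · rw [Fp_Iic_of_le hp0 le_rfl hlamM htM, ENNReal.toReal_one]

lemma qStar_Fp_one_sub (hρ0 : 0 < ρ) (hρ1 : ρ < 1) (hcen : (G (Iio lam)).toReal < ρ)
    (hlamM : lam ≤ M) : qStar ρ (Fp G lam M (1 - (G (Iio lam)).toReal)) = lam := by
  refine le_antisymm (qStar_le_of_le_cdf hρ0 ?_) (le_qStar_of_forall_lt hρ1 ?_ hcen)
  · rw [cdf_Fp_one_sub hlamM le_rfl]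
    exact hρ1.le
  · exact fun _ => Fp_Iic_of_lt hlamM

lemma cdf_Fp_zero_le (hlamM : lam ≤ M) {t : ℝ} (ht : t < M) :
    cdf (Fp G lam M 0) t ≤ (G (Iio lam)).toReal := by
  rw [cdf_eq_real, measureReal_def]
  rcases lt_or_ge t lam with htl | htl
  · rw [Fp_Iic_of_lt hlamM htl]
    exact measureReal_mono (Iic_subset_Iio.2 htl)
  · rw [toReal_Fp_Iic_of_le_of_lt le_rfl htl ht, add_zero]

lemma qStar_Fp_zero (hρ0 : 0 < ρ) (hρ1 : ρ < 1) (hcen : (G (Iio lam)).toReal < ρ)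
    (hlamM : lam ≤ M) : qStar ρ (Fp G lam M 0) = M := by
  have hp1 : 0 ≤ 1 - (G (Iio lam)).toReal := sub_nonneg.2 measureReal_le_one
  refine le_antisymm (qStar_le_of_le_cdf hρ0 ?_) (le_qStar_of_cdf_lt hρ1 ?_)
  · rw [cdf_eq_real, measureReal_def, Fp_Iic_of_le le_rfl hp1 hlamM le_rfl, ENNReal.toReal_one]
    exact hρ1.le
  · exact fun t ht => (cdf_Fp_zero_le hlamM ht).trans_lt hcen

lemma Fp_one_sub_mem_ambig (hρ0 : 0 < ρ) (hρ1 : ρ < 1) (hcen : (G (Iio lam)).toReal < ρ)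
    (hG : G ∈ GoodDist ρ M) (hlam : 0 ≤ lam) (hlamM : lam ≤ M) :
    Fp G lam M (1 - (G (Iio lam)).toReal) ∈ Ambig ρ M G lam :=
  Fp_mem_ambig hG hlam hlamM (sub_nonneg.2 measureReal_le_one) le_rfl
    ((qStar_Fp_one_sub hρ0 hρ1 hcen hlamM).trans_le hlamM)

lemma Fp_zero_mem_ambig (hρ0 : 0 < ρ) (hρ1 : ρ < 1) (hcen : (G (Iio lam)).toReal < ρ)
    (hG : G ∈ GoodDist ρ M) (hlam : 0 ≤ lam) (hlamM : lam ≤ M) :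
    Fp G lam M 0 ∈ Ambig ρ M G lam :=
  Fp_mem_ambig hG hlam hlamM le_rfl (sub_nonneg.2 measureReal_le_one)
    (qStar_Fp_zero hρ0 hρ1 hcen hlamM).le

end ExtremalTails

section Regret

variable {b h ρ M lam : ℝ} {G : Measure ℝ}

lemma criticalRatio_pos (hb : 0 < b) (hh : 0 < h) (hρ : ρ = b / (b + h)) : 0 < ρ :=
  hρ ▸ div_pos hb (add_pos hb hh)

lemma criticalRatio_lt_one (hb : 0 < b) (hh : 0 < h) (hρ : ρ = b / (b + h)) : ρ < 1 :=
  hρ ▸ (div_lt_one (add_pos hb hh)).2 (lt_add_of_pos_right b hh)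

lemma mul_lt_of_lt_criticalRatio (hb : 0 < b) (hh : 0 < h) (hρ : ρ = b / (b + h)) {g : ℝ}
    (hg : g < ρ) : (b + h) * g < b :=
  (lt_div_iff₀' (add_pos hb hh)).1 (hρ ▸ hg)

lemma bddAbove_regret_image (hb : 0 < b) (hh : 0 < h) (hρ : ρ = b / (b + h)) (q : ℝ) :
    BddAbove ((fun F => nvCost b h F q - nvCost b h F (qStar ρ F)) '' Ambig ρ M G lam) := by
  refine ⟨max b h * (|q| + M), forall_mem_image.2 fun F ⟨⟨hFprob, hF0, hFint, hFM⟩, _⟩ => ?_⟩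
  have h0 := qStar_nonneg (criticalRatio_pos hb hh hρ) (criticalRatio_lt_one hb hh hρ) hF0
  calc nvCost b h F q - nvCost b h F (qStar ρ F) ≤ max b h * |q - qStar ρ F| :=
        nvCost_sub_nvCost_le_mul_abs hb.le hh.le hFint _ _
    _ ≤ max b h * (|q| + M) := by
        gcongr
        exact (abs_sub _ _).trans (by rw [abs_of_nonneg h0]; linarith)

lemma le_regret (hb : 0 < b) (hh : 0 < h) (hρ : ρ = b / (b + h)) {q : ℝ} {F : Measure ℝ}
    (hF : F ∈ Ambig ρ M G lam) :
    nvCost b h F q - nvCost b h F (qStar ρ F) ≤ Regret b h ρ M G lam q :=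
  le_csSup (bddAbove_regret_image hb hh hρ q) (mem_image_of_mem _ hF)

lemma nvCost_sub_nvCost_qStar_le (hb : 0 < b) (hh : 0 < h) (hρ : ρ = b / (b + h))
    (hcen : (G (Iio lam)).toReal < ρ) {F : Measure ℝ} (hF : F ∈ Ambig ρ M G lam) {q : ℝ}
    (hq : lam ≤ q) :
    nvCost b h F q - nvCost b h F (qStar ρ F)
      ≤ max (h * (q - lam)) ((b - (b + h) * (G (Iio lam)).toReal) * (M - q)) := by
  obtain ⟨⟨hFprob, -, hFint, hFM⟩, hFG⟩ := hF
  have hlam := le_qStar_of_forall_lt (criticalRatio_lt_one hb hh hρ) hFG hcen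
  have hgb := mul_lt_of_lt_criticalRatio hb hh hρ hcen
  rcases le_total (qStar ρ F) q with hle | hlt
  · have := nvCost_sub_nvCost_le (add_pos hb hh).le hFint hle fun t _ => cdf_le_one F t
    exact le_max_of_le_left (by nlinarith)
  · have := le_nvCost_sub_nvCost (add_pos hb hh).le hFint hlt
      fun t ht => le_cdf_of_forall_lt hFG (hq.trans ht.1.le)
    exact le_max_of_le_right (by nlinarith)

lemma regret_le (hb : 0 < b) (hh : 0 < h) (hρ : ρ = b / (b + h))
    (hcen : (G (Iio lam)).toReal < ρ) (hG : G ∈ GoodDist ρ M) {q : ℝ} (hq : lam ≤ q) :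
    Regret b h ρ M G lam q
      ≤ max (h * (q - lam)) ((b - (b + h) * (G (Iio lam)).toReal) * (M - q)) :=
  csSup_le ⟨_, mem_image_of_mem _ (⟨hG, fun _ _ => rfl⟩ : G ∈ Ambig ρ M G lam)⟩
    (forall_mem_image.2 fun _ hF => nvCost_sub_nvCost_qStar_le hb hh hρ hcen hF hq)

lemma lam_le_of_mem_goodDist (hρ1 : ρ < 1) (hcen : (G (Iio lam)).toReal < ρ)
    (hG : G ∈ GoodDist ρ M) : lam ≤ M :=
  have := hG.1
  (le_qStar_of_forall_lt hρ1 (fun _ _ => rfl) hcen).trans hG.2.2.2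

lemma overage_le_regret (hb : 0 < b) (hh : 0 < h) (hρ : ρ = b / (b + h))
    (hcen : (G (Iio lam)).toReal < ρ) (hG : G ∈ GoodDist ρ M) (hlam : 0 ≤ lam) {q : ℝ}
    (hq : lam ≤ q) : h * (q - lam) ≤ Regret b h ρ M G lam q := by
  have := hG.1
  have hρ0 := criticalRatio_pos hb hh hρ
  have hρ1 := criticalRatio_lt_one hb hh hρ
  have hlamM := lam_le_of_mem_goodDist hρ1 hcen hG
  have hF := Fp_one_sub_mem_ambig hρ0 hρ1 hcen hG hlam hlamM
  have := le_nvCost_sub_nvCost (b := b) (h := h) (add_pos hb hh).le hF.1.2.2.1 hq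
    fun t ht => (cdf_Fp_one_sub hlamM ht.1.le).ge
  refine le_trans ?_ (le_regret hb hh hρ hF)
  rw [qStar_Fp_one_sub hρ0 hρ1 hcen hlamM]
  linarith

lemma underage_le_regret (hb : 0 < b) (hh : 0 < h) (hρ : ρ = b / (b + h))
    (hcen : (G (Iio lam)).toReal < ρ) (hG : G ∈ GoodDist ρ M) (hlam : 0 ≤ lam) {q : ℝ}
    (hq : q ≤ M) : (b - (b + h) * (G (Iio lam)).toReal) * (M - q) ≤ Regret b h ρ M G lam q := by
  have := hG.1
  have hρ0 := criticalRatio_pos hb hh hρ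
  have hρ1 := criticalRatio_lt_one hb hh hρ
  have hlamM := lam_le_of_mem_goodDist hρ1 hcen hG
  have hF := Fp_zero_mem_ambig hρ0 hρ1 hcen hG hlam hlamM
  have := nvCost_sub_nvCost_le (b := b) (h := h) (add_pos hb hh).le hF.1.2.2.1 hq
    fun t ht => cdf_Fp_zero_le hlamM ht.2
  refine le_trans ?_ (le_regret hb hh hρ hF)
  rw [qStar_Fp_zero hρ0 hρ1 hcen hlamM]
  linarith

lemma min_le_regret (hb : 0 < b) (hh : 0 < h) (hρ : ρ = b / (b + h))
    (hcen : (G (Iio lam)).toReal < ρ) (hG : G ∈ GoodDist ρ M) (hlam : 0 ≤ lam) {q₀ q : ℝ}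
    (hq₀ : lam ≤ q₀) (hq : q ≤ M) :
    min (h * (q₀ - lam)) ((b - (b + h) * (G (Iio lam)).toReal) * (M - q₀))
      ≤ Regret b h ρ M G lam q := by
  have hgb := mul_lt_of_lt_criticalRatio hb hh hρ hcen
  rcases le_total q₀ q with hq₀q | hqq₀
  · refine min_le_of_left_le ((mul_le_mul_of_nonneg_left ?_ hh.le).trans
      (overage_le_regret hb hh hρ hcen hG hlam (hq₀.trans hq₀q)))
    linarith
  · refine min_le_of_right_le ((mul_le_mul_of_nonneg_left ?_ (by linarith)).trans
      (underage_le_regret hb hh hρ hcen hG hlam hq))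
    linarith

end Regret

section UnidentifiableQuantity

variable {b h M lam : ℝ} {G : Measure ℝ}

lemma qDagger_sub_lam (hK : (b + h) * (1 - (G (Iio lam)).toReal) ≠ 0) :
    qDagger b h M G lam - lam = (b - (b + h) * (G (Iio lam)).toReal) * (M - lam)
      / ((b + h) * (1 - (G (Iio lam)).toReal)) := by
  rw [qDagger, eq_div_iff hK, sub_mul, div_mul_cancel₀ _ hK]
  ring

lemma sub_qDagger (hK : (b + h) * (1 - (G (Iio lam)).toReal) ≠ 0) :
    M - qDagger b h M G lam = h * (M - lam) / ((b + h) * (1 - (G (Iio lam)).toReal)) := by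
  rw [qDagger, eq_div_iff hK, sub_mul, div_mul_cancel₀ _ hK]
  ring

lemma qDagger_mem_Icc (hb : 0 < b) (hh : 0 < h) {ρ : ℝ} (hρ : ρ = b / (b + h))
    (hcen : (G (Iio lam)).toReal < ρ) (hlamM : lam ≤ M) : qDagger b h M G lam ∈ Icc lam M := by
  have hgb := mul_lt_of_lt_criticalRatio hb hh hρ hcen
  have hK : 0 < (b + h) * (1 - (G (Iio lam)).toReal) :=
    mul_pos (add_pos hb hh) (by linarith [criticalRatio_lt_one hb hh hρ])
  constructor
  · rw [← sub_nonneg, qDagger_sub_lam hK.ne']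
    exact div_nonneg (mul_nonneg (by linarith) (by linarith)) hK.le
  · rw [← sub_nonneg, sub_qDagger hK.ne']
    exact div_nonneg (mul_nonneg hh.le (by linarith)) hK.le

end UnidentifiableQuantity

theorem stmt1_general (b h M lam ρ : ℝ) (hb : 0 < b) (hh : 0 < h)
    (hlam : 0 ≤ lam) (hρ : ρ = b / (b + h))
    (G : Measure ℝ) (hG : G ∈ GoodDist ρ M)
    (hcen : (G (Iio lam)).toReal < ρ) :
    Risk b h ρ M G lam =
      h * (b - (b + h) * (G (Iio lam)).toReal) * (M - lam) /
        ((b + h) * (1 - (G (Iio lam)).toReal)) ∧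
    0 ≤ Risk b h ρ M G lam ∧
    qDagger b h M G lam ∈ Icc lam M ∧
    Regret b h ρ M G lam (qDagger b h M G lam) = Risk b h ρ M G lam := by
  have hρ1 := criticalRatio_lt_one hb hh hρ
  have hK : (b + h) * (1 - (G (Iio lam)).toReal) ≠ 0 :=
    (mul_pos (add_pos hb hh) (by linarith)).ne'
  have hqd := qDagger_mem_Icc hb hh hρ hcen (lam_le_of_mem_goodDist hρ1 hcen hG)
  set qd := qDagger b h M G lam
  set Δ := h * (b - (b + h) * (G (Iio lam)).toReal) * (M - lam) /
    ((b + h) * (1 - (G (Iio lam)).toReal))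
  have hover : h * (qd - lam) = Δ := by rw [qDagger_sub_lam hK]; ring
  have hunder : (b - (b + h) * (G (Iio lam)).toReal) * (M - qd) = Δ := by
    rw [sub_qDagger hK]; ring
  have hlower : ∀ q ∈ Icc 0 M, Δ ≤ Regret b h ρ M G lam q := fun q hq => by
    simpa only [hover, hunder, min_self] using min_le_regret hb hh hρ hcen hG hlam hqd.1 hq.2
  have hreg : Regret b h ρ M G lam qd = Δ :=
    le_antisymm ((regret_le hb hh hρ hcen hG hqd.1).trans (by rw [hover, hunder, max_self]))
      (hlower qd ⟨hlam.trans hqd.1, hqd.2⟩)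
  have hrisk : Risk b h ρ M G lam = Δ :=
    IsLeast.csInf_eq ⟨⟨qd, ⟨hlam.trans hqd.1, hqd.2⟩, hreg⟩, forall_mem_image.2 hlower⟩
  exact ⟨hrisk, hrisk ▸ hover ▸ mul_nonneg hh.le (sub_nonneg.2 hqd.1), hqd, hreg.trans hrisk.symm⟩

/-- If `G⁻(λ) < ρ`, then
`Δ = h(b - (b+h)G⁻(λ))(M - λ) / ((b+h)(1 - G⁻(λ)))`, this value is nonnegative,
`q†_G ∈ [λ, M]`, and the infimum defining `Δ` is attained at `q†_G`. -/
theorem stmt1 (b h M lam ρ : ℝ) (hb : 0 < b) (hh : 0 < h) (hM : 0 < M)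
    (hlam : 0 ≤ lam) (hρ : ρ = b / (b + h))
    (G : Measure ℝ) (hG : G ∈ GoodDist ρ M)
    (hcen : (G (Iio lam)).toReal < ρ) :
    Risk b h ρ M G lam =
      h * (b - (b + h) * (G (Iio lam)).toReal) * (M - lam) /
        ((b + h) * (1 - (G (Iio lam)).toReal)) ∧
    0 ≤ Risk b h ρ M G lam ∧
    qDagger b h M G lam ∈ Icc lam M ∧
    Regret b h ρ M G lam (qDagger b h M G lam) = Risk b h ρ M G lam :=
  stmt1_general b h M lam ρ hb hh hlam hρ G hG hcen
end

section
/- Suppose G⁻(λ) < ρ. Then for every q ∈ [0, M] the worst-case regret admits the following closed form: if q < λ, then Regret(q) = b·(M − q) + (b+h)·( E_G[(q − D)·1{D ≤ q}] − E_G[(M − D)·1{D < λ}] ); if λ ≤ q ≤ q†_G, then Regret(q) = (b − (b+h)·G⁻(λ))·(M − q); and if q > q†_G, then Regret(q) = h·(q − λ). -/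
open MeasureTheory Set

/-!
Under a demand distribution `F` the cost of ordering `t` has derivative `(b + h) F(t) - b`, so
the regret of `q` under `F` is the integral of this marginal cost between `q` and `q⋆_F`. Every
`F` in the ambiguity set has `q⋆_F ≥ λ`, and below `M` its CDF dominates that of
`F₀ = Fp G λ M 0`, which moves all the unobserved mass to `M`. Hence ordering below `q⋆_F` costs
at most the regret under `F₀`, and ordering above it costs at most `h (q - λ)`, the regret under
`F₁ = Fp G λ M (1 - G⁻(λ))`, which moves all the unobserved mass to `λ`. Both `F₀` and `F₁` lie
in the ambiguity set, so the worst-case regret is the larger of their regrets, and `q†_G` is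
where the two cross.
-/

namespace Newsvendor

open Filter

section Cost

variable {F : Measure ℝ}

lemma integrable_max_sub_zero [IsFiniteMeasure F] (hF : Integrable id F) (a : ℝ) :
    Integrable (fun x => max (a - x) 0) F :=
  ((integrable_const a).sub hF).pos_part

lemma nvCost_eq [IsProbabilityMeasure F] (hF : Integrable id F) (b h a : ℝ) :
    nvCost b h F a = b * (∫ x, x ∂F - a) + (b + h) * ∫ x, max (a - x) 0 ∂F := by
  have hloss : ∀ x, b * max (x - a) 0 + h * max (a - x) 0
      = b * (x - a) + (b + h) * max (a - x) 0 := fun x => by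
    have := max_zero_sub_eq_self (x - a)
    rw [neg_sub] at this
    linear_combination b * this
  have hx : Integrable (fun x => x) F := hF
  have hlin : Integrable (fun x => x - a) F := hx.sub (integrable_const a)
  simp_rw [nvCost, hloss]
  rw [integral_add (hlin.const_mul b) ((integrable_max_sub_zero hF a).const_mul _),
    integral_const_mul, integral_const_mul, integral_sub hx (integrable_const a), integral_const,
    probReal_univ, one_smul]

lemma nvCost_sub_nvCost_eq [IsProbabilityMeasure F] (hF : Integrable id F) (b h a c : ℝ) :
    nvCost b h F a - nvCost b h F c
      = b * (c - a) + (b + h) * ∫ x, (max (a - x) 0 - max (c - x) 0) ∂F := by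
  rw [nvCost_eq hF, nvCost_eq hF,
    integral_sub (integrable_max_sub_zero hF a) (integrable_max_sub_zero hF c)]
  ring

-- Fubini for the indicator of `{(x, t) | x ≤ t}` on `ℝ × (a, c]`.
lemma integral_max_sub_sub_max_sub [IsFiniteMeasure F] {a c : ℝ} (hac : a ≤ c) :
    ∫ x, (max (c - x) 0 - max (a - x) 0) ∂F = ∫ t in Ioc a c, (F (Iic t)).toReal := by
  have hlen : ∀ x, max (c - x) 0 - max (a - x) 0 = ∫ t in Ioc a c, (Ici x).indicator 1 t := by
    intro x
    rw [integral_congr_ae (indicator_ae_eq_of_ae_eq_set (Ioi_ae_eq_Ici (a := x)).symm).restrict,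
      integral_indicator_one measurableSet_Ioi, measureReal_restrict_apply measurableSet_Ioi,
      inter_comm, Ioc_inter_Ioi, Real.volume_real_Ioc]
    rcases le_total x a with hxa | hax
    · rw [max_eq_left hxa, max_eq_left (by linarith), max_eq_left (by linarith),
        max_eq_left (by linarith)]
      ring
    · rw [max_eq_right hax, max_eq_right (by linarith : a - x ≤ 0)]
      ring
  have hint : Integrable (Function.uncurry fun x t => (Ici x).indicator (1 : ℝ → ℝ) t)
      (F.prod (volume.restrict (Ioc a c))) := by
    have : IsFiniteMeasure (volume.restrict (Ioc a c)) :=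
      isFiniteMeasure_restrict.2 measure_Ioc_lt_top.ne
    exact (integrable_const (1 : ℝ)).indicator (measurableSet_le measurable_fst measurable_snd)
  simp_rw [hlen]
  rw [integral_integral_swap hint]
  refine setIntegral_congr_fun measurableSet_Ioc fun t _ => ?_
  have hswap : (fun x => (Ici x).indicator (1 : ℝ → ℝ) t) = (Iic t).indicator 1 := by
    ext x
    simp [indicator_apply]
  rw [hswap, integral_indicator_one measurableSet_Iic]
  rfl

lemma monotone_measure_Iic_toReal [IsFiniteMeasure F] : Monotone fun t => (F (Iic t)).toReal :=
  fun _ _ hst => ENNReal.toReal_mono (measure_ne_top F _) (measure_mono (Iic_subset_Iic.2 hst))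

lemma integrableOn_measure_Iic_toReal [IsFiniteMeasure F] (a c : ℝ) :
    IntegrableOn (fun t => (F (Iic t)).toReal) (Icc a c) :=
  monotone_measure_Iic_toReal.locallyIntegrable.integrableOn_isCompact isCompact_Icc

lemma integrableOn_const_sub_mul_measure_Iic_toReal [IsFiniteMeasure F] (b h a c : ℝ) :
    IntegrableOn (fun t => b - (b + h) * (F (Iic t)).toReal) (Icc a c) :=
  (integrableOn_const measure_Icc_lt_top.ne).sub ((integrableOn_measure_Iic_toReal a c).const_mul _)

lemma nvCost_sub_nvCost [IsProbabilityMeasure F] (hF : Integrable id F) (b h : ℝ) {a c : ℝ}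
    (hac : a ≤ c) :
    nvCost b h F a - nvCost b h F c = ∫ t in Ioc a c, (b - (b + h) * (F (Iic t)).toReal) := by
  have hconst : Integrable (fun _ => b) (volume.restrict (Ioc a c)) :=
    integrableOn_const measure_Ioc_lt_top.ne
  have hcdf : Integrable (fun t => (F (Iic t)).toReal) (volume.restrict (Ioc a c)) :=
    (integrableOn_measure_Iic_toReal a c).mono_set Ioc_subset_Icc_self
  have hflip : ∫ x, (max (a - x) 0 - max (c - x) 0) ∂F
      = -∫ t in Ioc a c, (F (Iic t)).toReal := by
    rw [← integral_max_sub_sub_max_sub hac, ← integral_neg]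
    simp only [neg_sub]
  rw [nvCost_sub_nvCost_eq hF, hflip, integral_sub hconst (hcdf.const_mul _), integral_const_mul,
    setIntegral_const, Real.volume_real_Ioc_of_le hac, smul_eq_mul]
  ring

lemma nvCost_sub_nvCost_le [IsProbabilityMeasure F] (hF : Integrable id F) {b h : ℝ}
    (hbh : 0 ≤ b + h) {s q : ℝ} (hsq : s ≤ q) :
    nvCost b h F q - nvCost b h F s ≤ h * (q - s) := by
  have hlower : ∫ _ in Ioc s q, -h ≤ ∫ t in Ioc s q, (b - (b + h) * (F (Iic t)).toReal) :=
    setIntegral_mono_on (integrableOn_const measure_Ioc_lt_top.ne)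
      ((integrableOn_const_sub_mul_measure_Iic_toReal b h s q).mono_set Ioc_subset_Icc_self)
      measurableSet_Ioc fun t _ => by
        have hle : (F (Iic t)).toReal ≤ 1 := measureReal_le_one
        nlinarith
  rw [setIntegral_const, Real.volume_real_Ioc_of_le hsq, smul_eq_mul] at hlower
  linarith [nvCost_sub_nvCost hF b h hsq]

end Cost

section Quantile

variable {F : Measure ℝ} {ρ c : ℝ}

lemma qStar_eq_of [IsFiniteMeasure F] (hc : ρ ≤ (F (Iic c)).toReal)
    (hlt : ∀ t < c, (F (Iic t)).toReal < ρ) : qStar ρ F = c := by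
  have hset : {t : ℝ | ρ ≤ (F (Iic t)).toReal} = Ici c := by
    ext t
    exact ⟨fun ht => not_lt.1 fun htc => (hlt t htc).not_ge ht,
      fun hct => hc.trans (monotone_measure_Iic_toReal hct)⟩
  rw [qStar, hset, csInf_Ici]

lemma le_qStar [IsProbabilityMeasure F] (hρ : ρ < 1) (hlt : ∀ t < c, (F (Iic t)).toReal < ρ) :
    c ≤ qStar ρ F := by
  have hne : {t : ℝ | ρ ≤ (F (Iic t)).toReal}.Nonempty := by
    have hlim : Tendsto (fun t => (F (Iic t)).toReal) atTop (nhds 1) := by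
      simpa [Function.comp_def] using
        (ENNReal.tendsto_toReal (measure_ne_top F univ)).comp (tendsto_measure_Iic_atTop F)
    exact (hlim.eventually (eventually_ge_nhds hρ)).exists
  exact le_csInf hne fun t ht => not_lt.1 fun htc => (hlt t htc).not_ge ht

end Quantile

lemma measure_Iio_eq_of_forall_lt {F G : Measure ℝ} {lam : ℝ}
    (hFG : ∀ x < lam, F (Iic x) = G (Iic x)) : F (Iio lam) = G (Iio lam) := by
  have hunion : ⋃ n : ℕ, Iic (lam - 1 / (n + 1)) = Iio lam :=
    iUnion_Iic_eq_Iio_of_lt_of_tendsto (fun n => by simp; positivity)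
      (by simpa using tendsto_const_nhds.sub (tendsto_one_div_add_atTop_nhds_zero_nat (𝕜 := ℝ)))
  have hmono : Monotone fun n : ℕ => Iic (lam - 1 / ((n : ℝ) + 1)) := fun m n hmn =>
    Iic_subset_Iic.2 (sub_le_sub_left (one_div_le_one_div_of_le (by positivity) (by simpa)) _)
  rw [← hunion, hmono.measure_iUnion, hmono.measure_iUnion]
  exact iSup_congr fun n => hFG _ (by simp; positivity)

section TwoPointTail

variable {G : Measure ℝ} {lam M p : ℝ}

lemma Fp_apply {s : Set ℝ} (hs : MeasurableSet s) :
    Fp G lam M p s = G (s ∩ Iio lam) + ENNReal.ofReal p * s.indicator 1 lam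
      + ENNReal.ofReal (1 - p - (G (Iio lam)).toReal) * s.indicator 1 M := by
  simp [Fp, Measure.restrict_apply hs, Measure.dirac_apply' _ hs]

lemma Fp_Iio_zero (hG0 : G (Iio 0) = 0) (hlam : 0 ≤ lam) (hM : 0 ≤ M) :
    Fp G lam M p (Iio 0) = 0 := by
  rw [Fp_apply measurableSet_Iio, indicator_of_notMem (by simpa using hlam),
    indicator_of_notMem (by simpa using hM), measure_mono_null inter_subset_left hG0]
  simp

lemma integral_Fp (hp : 0 ≤ p) (hpr : p + (G (Iio lam)).toReal ≤ 1) {f : ℝ → ℝ}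
    (hf : Integrable f G) :
    ∫ x, f x ∂(Fp G lam M p)
      = ∫ x in Iio lam, f x ∂G + p * f lam + (1 - p - (G (Iio lam)).toReal) * f M := by
  have hdirac : ∀ a : ℝ, Integrable f (Measure.dirac a) := fun a => integrable_dirac enorm_lt_top
  rw [Fp, integral_add_measure
      (hf.restrict.add_measure ((hdirac lam).smul_measure ENNReal.ofReal_ne_top))
      ((hdirac M).smul_measure ENNReal.ofReal_ne_top),
    integral_add_measure hf.restrict ((hdirac lam).smul_measure ENNReal.ofReal_ne_top),
    integral_smul_measure, integral_smul_measure, integral_dirac, integral_dirac,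
    ENNReal.toReal_ofReal hp, ENNReal.toReal_ofReal (by linarith), smul_eq_mul, smul_eq_mul]

lemma integrable_id_Fp (hG : Integrable id G) : Integrable id (Fp G lam M p) :=
  (hG.restrict.add_measure
    ((integrable_dirac enorm_lt_top).smul_measure ENNReal.ofReal_ne_top)).add_measure
    ((integrable_dirac enorm_lt_top).smul_measure ENNReal.ofReal_ne_top)

lemma Fp_Iic_of_lt (hlamM : lam ≤ M) {t : ℝ} (ht : t < lam) :
    Fp G lam M p (Iic t) = G (Iic t) := by
  rw [Fp_apply measurableSet_Iic, indicator_of_notMem (by simpa using ht),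
    indicator_of_notMem (by simpa using ht.trans_le hlamM),
    inter_eq_self_of_subset_left (Iic_subset_Iio.2 ht)]
  simp

lemma Fp_Iic_of_le_of_lt {t : ℝ} (ht : lam ≤ t) (htM : t < M) :
    Fp G lam M p (Iic t) = G (Iio lam) + ENNReal.ofReal p := by
  rw [Fp_apply measurableSet_Iic, indicator_of_mem (by simpa using ht),
    indicator_of_notMem (by simpa using htM),
    inter_eq_self_of_subset_right (Iio_subset_Iic_iff.2 ht)]
  simp

lemma Fp_Iic_toReal_of_le_of_lt [IsFiniteMeasure G] (hp : 0 ≤ p) {t : ℝ} (ht : lam ≤ t)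
    (htM : t < M) : (Fp G lam M p (Iic t)).toReal = (G (Iio lam)).toReal + p := by
  rw [Fp_Iic_of_le_of_lt ht htM, ENNReal.toReal_add (measure_ne_top G _) ENNReal.ofReal_ne_top,
    ENNReal.toReal_ofReal hp]

variable [IsProbabilityMeasure G]

lemma Fp_total_mass (hp : 0 ≤ p) (hpr : p + (G (Iio lam)).toReal ≤ 1) :
    G (Iio lam) + ENNReal.ofReal p + ENNReal.ofReal (1 - p - (G (Iio lam)).toReal) = 1 := by
  have hr := (ENNReal.ofReal_toReal (measure_ne_top G (Iio lam))).symm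
  have hr0 : 0 ≤ (G (Iio lam)).toReal := ENNReal.toReal_nonneg
  generalize (G (Iio lam)).toReal = r at hr hr0 hpr ⊢
  rw [hr, ← ENNReal.ofReal_add hr0 hp, ← ENNReal.ofReal_add (by positivity) (by linarith),
    show r + p + (1 - p - r) = 1 by ring, ENNReal.ofReal_one]

lemma isProbabilityMeasure_Fp (hp : 0 ≤ p) (hpr : p + (G (Iio lam)).toReal ≤ 1) :
    IsProbabilityMeasure (Fp G lam M p) :=
  ⟨by simpa [Fp_apply MeasurableSet.univ] using Fp_total_mass hp hpr⟩

lemma Fp_Iic_of_le (hp : 0 ≤ p) (hpr : p + (G (Iio lam)).toReal ≤ 1) (hlamM : lam ≤ M) {t : ℝ}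
    (ht : M ≤ t) : Fp G lam M p (Iic t) = 1 := by
  rw [Fp_apply measurableSet_Iic, indicator_of_mem (by simpa using hlamM.trans ht),
    indicator_of_mem (by simpa using ht),
    inter_eq_self_of_subset_right (Iio_subset_Iic_iff.2 (hlamM.trans ht))]
  simpa using Fp_total_mass hp hpr

end TwoPointTail

noncomputable def nvRegret (b h ρ : ℝ) (F : Measure ℝ) (q : ℝ) : ℝ :=
  nvCost b h F q - nvCost b h F (qStar ρ F)

lemma Regret_eq_nvRegret {b h ρ M lam q : ℝ} {G F₀ : Measure ℝ} (hF₀ : F₀ ∈ Ambig ρ M G lam)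
    (hmax : ∀ F ∈ Ambig ρ M G lam, nvRegret b h ρ F q ≤ nvRegret b h ρ F₀ q) :
    Regret b h ρ M G lam q = nvRegret b h ρ F₀ q :=
  IsGreatest.csSup_eq ⟨mem_image_of_mem _ hF₀, forall_mem_image.2 hmax⟩

lemma le_qDagger_iff {b h M lam x : ℝ} {G : Measure ℝ} (hbh : 0 < b + h)
    (hr : (G (Iio lam)).toReal < 1) :
    x ≤ qDagger b h M G lam ↔
      h * (x - lam) ≤ (b - (b + h) * (G (Iio lam)).toReal) * (M - x) := by
  rw [qDagger, le_div_iff₀ (mul_pos hbh (sub_pos.2 hr))]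
  constructor <;> intro hx <;> linarith

lemma sub_mul_pos_of_lt_div {b h x : ℝ} (hbh : 0 < b + h) (hx : x < b / (b + h)) :
    0 < b - (b + h) * x := by
  rw [lt_div_iff₀ hbh] at hx
  linarith

section WorstCase

variable {b h ρ M lam q : ℝ} {G : Measure ℝ} [IsProbabilityMeasure G]

lemma measure_Iic_toReal_lt_of_lt (hcen : (G (Iio lam)).toReal < ρ) {t : ℝ} (ht : t < lam) :
    (G (Iic t)).toReal < ρ :=
  (ENNReal.toReal_mono (measure_ne_top G _) (measure_mono (Iic_subset_Iio.2 ht))).trans_lt hcen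

lemma lam_le_qStar (hρ1 : ρ < 1) (hcen : (G (Iio lam)).toReal < ρ) {F : Measure ℝ}
    [IsProbabilityMeasure F] (hFG : ∀ x < lam, F (Iic x) = G (Iic x)) : lam ≤ qStar ρ F :=
  le_qStar hρ1 fun t ht => by
    rw [hFG t ht]
    exact measure_Iic_toReal_lt_of_lt hcen ht

lemma lam_le_qStar_of_mem_Ambig (hρ1 : ρ < 1) (hcen : (G (Iio lam)).toReal < ρ)
    {F : Measure ℝ} (hF : F ∈ Ambig ρ M G lam) : lam ≤ qStar ρ F :=
  have := hF.1.1
  lam_le_qStar hρ1 hcen hF.2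

lemma qStar_Fp_zero (hρ1 : ρ < 1) (hcen : (G (Iio lam)).toReal < ρ) (hlamM : lam ≤ M) :
    qStar ρ (Fp G lam M 0) = M := by
  have hpr : 0 + (G (Iio lam)).toReal ≤ 1 := by linarith
  have := isProbabilityMeasure_Fp (M := M) le_rfl hpr
  refine qStar_eq_of (by simpa [Fp_Iic_of_le le_rfl hpr hlamM le_rfl] using hρ1.le)
    fun t htM => ?_
  rcases lt_or_ge t lam with ht | ht
  · rw [Fp_Iic_of_lt hlamM ht]
    exact measure_Iic_toReal_lt_of_lt hcen ht
  · rw [Fp_Iic_toReal_of_le_of_lt le_rfl ht htM, add_zero]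
    exact hcen

lemma qStar_Fp_one_sub (hρ1 : ρ < 1) (hcen : (G (Iio lam)).toReal < ρ) (hlamM : lam ≤ M) :
    qStar ρ (Fp G lam M (1 - (G (Iio lam)).toReal)) = lam := by
  have hp : 0 ≤ 1 - (G (Iio lam)).toReal := by linarith
  have hpr : 1 - (G (Iio lam)).toReal + (G (Iio lam)).toReal ≤ 1 := by linarith
  have := isProbabilityMeasure_Fp (M := M) hp hpr
  have hlam : (Fp G lam M (1 - (G (Iio lam)).toReal) (Iic lam)).toReal = 1 := by
    rcases hlamM.lt_or_eq with hlt | rfl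
    · rw [Fp_Iic_toReal_of_le_of_lt hp le_rfl hlt]
      ring
    · simp [Fp_Iic_of_le hp hpr le_rfl le_rfl]
  refine qStar_eq_of (by rw [hlam]; exact hρ1.le) fun t ht => ?_
  rw [Fp_Iic_of_lt hlamM ht]
  exact measure_Iic_toReal_lt_of_lt hcen ht

lemma Fp_mem_Ambig (hG0 : G (Iio 0) = 0) (hGint : Integrable id G) (hlam : 0 ≤ lam)
    (hM : 0 ≤ M) (hlamM : lam ≤ M) {p : ℝ} (hp : 0 ≤ p) (hpr : p + (G (Iio lam)).toReal ≤ 1)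
    (hqM : qStar ρ (Fp G lam M p) ≤ M) : Fp G lam M p ∈ Ambig ρ M G lam :=
  ⟨⟨isProbabilityMeasure_Fp hp hpr, Fp_Iio_zero hG0 hlam hM, integrable_id_Fp hGint, hqM⟩,
    fun _ hx => Fp_Iic_of_lt hlamM hx⟩

lemma Fp_zero_Iic_toReal_le (hlamM : lam ≤ M) {t : ℝ} (htM : t < M) :
    (Fp G lam M 0 (Iic t)).toReal ≤ (G (Iio lam)).toReal := by
  rcases lt_or_ge t lam with ht | ht
  · rw [Fp_Iic_of_lt hlamM ht]
    exact ENNReal.toReal_mono (measure_ne_top G _) (measure_mono (Iic_subset_Iio.2 ht))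
  · rw [Fp_Iic_toReal_of_le_of_lt le_rfl ht htM, add_zero]

lemma Fp_zero_Iic_toReal_le_of_forall_lt (hlamM : lam ≤ M) {F : Measure ℝ} [IsFiniteMeasure F]
    (hFG : ∀ x < lam, F (Iic x) = G (Iic x)) {t : ℝ} (htM : t < M) :
    (Fp G lam M 0 (Iic t)).toReal ≤ (F (Iic t)).toReal := by
  rcases lt_or_ge t lam with ht | ht
  · rw [Fp_Iic_of_lt hlamM ht, hFG t ht]
  · calc (Fp G lam M 0 (Iic t)).toReal ≤ (G (Iio lam)).toReal := Fp_zero_Iic_toReal_le hlamM htM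
      _ = (F (Iio lam)).toReal := by rw [measure_Iio_eq_of_forall_lt hFG]
      _ ≤ (F (Iic t)).toReal :=
        ENNReal.toReal_mono (measure_ne_top F _) (measure_mono (Iio_subset_Iic_iff.2 ht))

lemma nvRegret_le_nvRegret_Fp_zero (hbh : 0 < b + h) (hρ : ρ = b / (b + h)) (hρ1 : ρ < 1)
    (hcen : (G (Iio lam)).toReal < ρ) (hGint : Integrable id G) (hlamM : lam ≤ M)
    {F : Measure ℝ} (hF : F ∈ Ambig ρ M G lam) (hq : q ≤ qStar ρ F) :
    nvRegret b h ρ F q ≤ nvRegret b h ρ (Fp G lam M 0) q := by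
  obtain ⟨⟨hFprob, -, hFint, hFM⟩, hFG⟩ := hF
  have := isProbabilityMeasure_Fp (G := G) (lam := lam) (M := M) le_rfl
    (by rw [zero_add]; exact measureReal_le_one)
  have hint : ∀ {X : Measure ℝ} [IsFiniteMeasure X] (s : ℝ),
      IntegrableOn (fun t => b - (b + h) * (X (Iic t)).toReal) (Ioo q s) := fun s =>
    (integrableOn_const_sub_mul_measure_Iic_toReal b h q s).mono_set Ioo_subset_Icc_self
  rw [nvRegret, nvRegret, qStar_Fp_zero hρ1 hcen hlamM, nvCost_sub_nvCost hFint b h hq,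
    nvCost_sub_nvCost (integrable_id_Fp hGint) b h (hq.trans hFM),
    integral_Ioc_eq_integral_Ioo, integral_Ioc_eq_integral_Ioo]
  calc ∫ t in Ioo q (qStar ρ F), (b - (b + h) * (F (Iic t)).toReal)
      ≤ ∫ t in Ioo q (qStar ρ F), (b - (b + h) * (Fp G lam M 0 (Iic t)).toReal) :=
        setIntegral_mono_on (hint _) (hint _) measurableSet_Ioo fun t ht => by
          nlinarith [Fp_zero_Iic_toReal_le_of_forall_lt hlamM hFG (ht.2.trans_le hFM)]
    _ ≤ ∫ t in Ioo q M, (b - (b + h) * (Fp G lam M 0 (Iic t)).toReal) := by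
        refine setIntegral_mono_set (hint _) ?_ (Ioo_subset_Ioo_right hFM).eventuallyLE
        refine (ae_restrict_iff' measurableSet_Ioo).2 (ae_of_all _ fun t ht => ?_)
        exact (sub_mul_pos_of_lt_div hbh
          (hρ ▸ (Fp_zero_Iic_toReal_le hlamM ht.2).trans_lt hcen)).le

lemma nvRegret_le_max (hb : 0 < b) (hh : 0 < h) (hρ : ρ = b / (b + h)) (hρ1 : ρ < 1)
    (hcen : (G (Iio lam)).toReal < ρ) (hGint : Integrable id G) (hlamM : lam ≤ M)
    {F : Measure ℝ} (hF : F ∈ Ambig ρ M G lam) :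
    nvRegret b h ρ F q ≤ max (h * (q - lam)) (nvRegret b h ρ (Fp G lam M 0) q) := by
  rcases le_total (qStar ρ F) q with hsq | hqs
  · have hs := lam_le_qStar_of_mem_Ambig hρ1 hcen hF
    obtain ⟨⟨hFprob, -, hFint, -⟩, -⟩ := hF
    calc nvRegret b h ρ F q ≤ h * (q - qStar ρ F) :=
          nvCost_sub_nvCost_le hFint (by positivity) hsq
      _ ≤ h * (q - lam) := by gcongr
      _ ≤ _ := le_max_left _ _
  · exact (nvRegret_le_nvRegret_Fp_zero (by positivity) hρ hρ1 hcen hGint hlamM hF hqs).trans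
      (le_max_right _ _)

lemma integrable_max_sub_sub_max_sub (hGint : Integrable id G) (a c : ℝ) :
    Integrable (fun x => max (a - x) 0 - max (c - x) 0) G :=
  (integrable_max_sub_zero hGint a).sub (integrable_max_sub_zero hGint c)

lemma nvRegret_Fp_zero_of_lt (hρ1 : ρ < 1) (hcen : (G (Iio lam)).toReal < ρ)
    (hGint : Integrable id G) (hql : q < lam) (hlamM : lam ≤ M) :
    nvRegret b h ρ (Fp G lam M 0) q
      = b * (M - q) + (b + h) * ((∫ x in Iic q, (q - x) ∂G) - ∫ x in Iio lam, (M - x) ∂G) := by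
  have hpr : 0 + (G (Iio lam)).toReal ≤ 1 := by rw [zero_add]; exact measureReal_le_one
  have hlow : ∫ x in Iio lam, max (q - x) 0 ∂G = ∫ x in Iic q, (q - x) ∂G := by
    rw [setIntegral_eq_of_subset_of_forall_sdiff_eq_zero measurableSet_Iio (Iic_subset_Iio.2 hql)
      fun x hx => max_eq_right (sub_nonpos.2 (not_le.1 hx.2).le)]
    exact setIntegral_congr_fun measurableSet_Iic fun x hx => max_eq_left (sub_nonneg.2 hx)
  have hhigh : ∫ x in Iio lam, max (M - x) 0 ∂G = ∫ x in Iio lam, (M - x) ∂G :=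
    setIntegral_congr_fun measurableSet_Iio fun x hx =>
      max_eq_left (sub_nonneg.2 ((mem_Iio.1 hx).le.trans hlamM))
  have := isProbabilityMeasure_Fp (G := G) (M := M) le_rfl hpr
  rw [nvRegret, qStar_Fp_zero hρ1 hcen hlamM, nvCost_sub_nvCost_eq (integrable_id_Fp hGint),
    integral_Fp le_rfl hpr (integrable_max_sub_sub_max_sub hGint q M),
    integral_sub (integrable_max_sub_zero hGint q).restrict
      (integrable_max_sub_zero hGint M).restrict,
    hlow, hhigh, max_eq_right (sub_nonpos.2 (hql.le.trans hlamM)), sub_self, max_self]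
  ring

lemma nvRegret_Fp_zero_of_le (hρ1 : ρ < 1) (hcen : (G (Iio lam)).toReal < ρ)
    (hGint : Integrable id G) (hlq : lam ≤ q) (hqM : q ≤ M) :
    nvRegret b h ρ (Fp G lam M 0) q = (b - (b + h) * (G (Iio lam)).toReal) * (M - q) := by
  have hpr : 0 + (G (Iio lam)).toReal ≤ 1 := by rw [zero_add]; exact measureReal_le_one
  have hconst : ∀ x ∈ Iio lam, max (q - x) 0 - max (M - x) 0 = q - M := fun x hx => by
    rw [max_eq_left (by linarith [mem_Iio.1 hx]), max_eq_left (by linarith [mem_Iio.1 hx])]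
    ring
  have := isProbabilityMeasure_Fp (G := G) (M := M) le_rfl hpr
  rw [nvRegret, qStar_Fp_zero hρ1 hcen (hlq.trans hqM),
    nvCost_sub_nvCost_eq (integrable_id_Fp hGint),
    integral_Fp le_rfl hpr (integrable_max_sub_sub_max_sub hGint q M),
    setIntegral_congr_fun measurableSet_Iio hconst, setIntegral_const, smul_eq_mul,
    max_eq_right (sub_nonpos.2 hqM), sub_self, max_self, measureReal_def]
  ring

lemma nvRegret_Fp_one_sub (hρ1 : ρ < 1) (hcen : (G (Iio lam)).toReal < ρ) (hlamM : lam ≤ M)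
    (hGint : Integrable id G) (hlq : lam ≤ q) :
    nvRegret b h ρ (Fp G lam M (1 - (G (Iio lam)).toReal)) q = h * (q - lam) := by
  have hp : 0 ≤ 1 - (G (Iio lam)).toReal := sub_nonneg.2 measureReal_le_one
  have hpr : 1 - (G (Iio lam)).toReal + (G (Iio lam)).toReal ≤ 1 := by linarith
  have hconst : ∀ x ∈ Iio lam, max (q - x) 0 - max (lam - x) 0 = q - lam := fun x hx => by
    rw [max_eq_left (by linarith [mem_Iio.1 hx]), max_eq_left (by linarith [mem_Iio.1 hx])]
    ring
  have := isProbabilityMeasure_Fp (G := G) (M := M) hp hpr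
  rw [nvRegret, qStar_Fp_one_sub hρ1 hcen hlamM, nvCost_sub_nvCost_eq (integrable_id_Fp hGint),
    integral_Fp hp hpr (integrable_max_sub_sub_max_sub hGint q lam),
    setIntegral_congr_fun measurableSet_Iio hconst, setIntegral_const, smul_eq_mul,
    max_eq_left (sub_nonneg.2 hlq), sub_self, max_self, measureReal_def]
  ring

end WorstCase

end Newsvendor

open Newsvendor

/-- closed form for the worst-case regret in the unidentifiable
regime `G⁻(λ) < ρ`. -/
theorem stmt5 (b h M lam ρ : ℝ) (hb : 0 < b) (hh : 0 < h) (hM : 0 < M)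
    (hlam : 0 ≤ lam) (hρ : ρ = b / (b + h))
    (G : Measure ℝ) (hG : G ∈ GoodDist ρ M)
    (hcen : (G (Iio lam)).toReal < ρ)
    (q : ℝ) (hq : q ∈ Icc (0 : ℝ) M) :
    (q < lam →
      Regret b h ρ M G lam q =
        b * (M - q) + (b + h) *
          ((∫ x in Iic q, (q - x) ∂G) - ∫ x in Iio lam, (M - x) ∂G)) ∧
    (lam ≤ q → q ≤ qDagger b h M G lam →
      Regret b h ρ M G lam q = (b - (b + h) * (G (Iio lam)).toReal) * (M - q)) ∧
    (qDagger b h M G lam < q →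
      Regret b h ρ M G lam q = h * (q - lam)) := by
  obtain ⟨hGprob, hG0, hGint, hGM⟩ := hG
  have hbh : 0 < b + h := by positivity
  have hρ1 : ρ < 1 := by rw [hρ, div_lt_one hbh]; linarith
  have hr1 : (G (Iio lam)).toReal < 1 := hcen.trans hρ1
  have hlamM : lam ≤ M := (lam_le_qStar hρ1 hcen fun _ _ => rfl).trans hGM
  have hF₀ : Fp G lam M 0 ∈ Ambig ρ M G lam := Fp_mem_Ambig hG0 hGint hlam hM.le hlamM le_rfl
    (by linarith) (qStar_Fp_zero hρ1 hcen hlamM).le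
  have hF₁ : Fp G lam M (1 - (G (Iio lam)).toReal) ∈ Ambig ρ M G lam :=
    Fp_mem_Ambig hG0 hGint hlam hM.le hlamM (by linarith) (by linarith)
      ((qStar_Fp_one_sub hρ1 hcen hlamM).trans_le hlamM)
  have hbound := fun F (hF : F ∈ Ambig ρ M G lam) =>
    nvRegret_le_max (q := q) hb hh hρ hρ1 hcen hGint hlamM hF
  refine ⟨fun hql => ?_, fun hlq hqd => ?_, fun hqd => ?_⟩
  · rw [Regret_eq_nvRegret hF₀ fun F hF => nvRegret_le_nvRegret_Fp_zero hbh hρ hρ1 hcen hGint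
      hlamM hF (hql.le.trans (lam_le_qStar_of_mem_Ambig hρ1 hcen hF)),
      nvRegret_Fp_zero_of_lt hρ1 hcen hGint hql hlamM]
  · have hR₀ := nvRegret_Fp_zero_of_le (b := b) (h := h) hρ1 hcen hGint hlq hq.2
    rw [Regret_eq_nvRegret hF₀ fun F hF => (hbound F hF).trans (max_le ?_ le_rfl), hR₀]
    exact hR₀ ▸ (le_qDagger_iff hbh hr1).1 hqd
  · have hlq : lam ≤ q := by
      by_contra! hql
      refine hqd.not_ge ((le_qDagger_iff hbh hr1).2 ?_)
      nlinarith [sub_mul_pos_of_lt_div hbh (hρ ▸ hcen), hq.2]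
    have hR₀ := nvRegret_Fp_zero_of_le (b := b) (h := h) hρ1 hcen hGint hlq hq.2
    have hR₁ := nvRegret_Fp_one_sub (b := b) (h := h) (M := M) hρ1 hcen hlamM hGint hlq
    rw [Regret_eq_nvRegret hF₁ fun F hF => (hbound F hF).trans (max_le hR₁.ge ?_), hR₁]
    rw [hR₀, hR₁]
    exact (not_le.1 ((le_qDagger_iff hbh hr1).not.1 hqd.not_ge)).le
end

section
/- Assume λ ≤ M and let p ∈ [0, 1 − G⁻(λ)]. Then the optimal newsvendor quantity of the two-point-tail distribution F_p is: q⋆_{F_p} = q⋆_G if G⁻(λ) ≥ ρ; q⋆_{F_p} = λ if G⁻(λ) < ρ ≤ G⁻(λ) + p; and q⋆_{F_p} = M if G⁻(λ) + p < ρ. -/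
open MeasureTheory Set

/-- the optimal newsvendor quantity of the two-point-tail distribution `F_p`. -/
theorem stmt8 (b h M lam ρ : ℝ) (hb : 0 < b) (hh : 0 < h) (hM : 0 < M)
    (hlam : 0 ≤ lam) (hlamM : lam ≤ M) (hρ : ρ = b / (b + h))
    (G : Measure ℝ) (hG : G ∈ GoodDist ρ M)
    (p : ℝ) (hp : p ∈ Icc (0 : ℝ) (1 - (G (Iio lam)).toReal)) :
    (ρ ≤ (G (Iio lam)).toReal → qStar ρ (Fp G lam M p) = qStar ρ G) ∧
    ((G (Iio lam)).toReal < ρ → ρ ≤ (G (Iio lam)).toReal + p →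
      qStar ρ (Fp G lam M p) = lam) ∧
    ((G (Iio lam)).toReal + p < ρ → qStar ρ (Fp G lam M p) = M) := by
  obtain ⟨hp0, hp1⟩ := hp
  obtain ⟨hGprob, hGnn, hGint, hGq⟩ := hG
  haveI := hGprob
  have hGlam_ne : G (Iio lam) ≠ ⊤ := measure_ne_top _ _
  set g : ℝ := (G (Iio lam)).toReal with hg
  have hg0 : 0 ≤ g := ENNReal.toReal_nonneg
  have hbh : 0 < b + h := by linarith
  have hρ0 : 0 < ρ := by rw [hρ]; positivity
  have hρ1 : ρ < 1 := by rw [hρ, div_lt_one hbh]; linarith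
  have htail0 : 0 ≤ 1 - p - g := by linarith
  -- value of Fp on Iic q, three cases
  have hFlt : ∀ q, q < lam → Fp G lam M p (Iic q) = G (Iic q) := by
    intro q hq
    simp only [Fp, Measure.coe_add, Pi.add_apply, Measure.smul_apply, smul_eq_mul,
      Measure.restrict_apply measurableSet_Iic,
      Measure.dirac_apply' _ measurableSet_Iic]
    rw [Set.indicator_of_notMem (by simp only [mem_Iic, not_le]; exact hq),
      Set.indicator_of_notMem (by simp only [mem_Iic, not_le]; exact lt_of_lt_of_le hq hlamM)]
    have e1 : Iic q ∩ Iio lam = Iic q := by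
      rw [Set.inter_eq_left]; exact fun x hx => lt_of_le_of_lt hx hq
    rw [e1]; simp
  have hFmid : ∀ q, lam ≤ q → q < M →
      (Fp G lam M p (Iic q)).toReal = g + p := by
    intro q hq hqM
    simp only [Fp, Measure.coe_add, Pi.add_apply, Measure.smul_apply, smul_eq_mul,
      Measure.restrict_apply measurableSet_Iic,
      Measure.dirac_apply' _ measurableSet_Iic]
    rw [Set.indicator_of_mem (by simpa using hq),
      Set.indicator_of_notMem (by simp only [mem_Iic, not_le]; exact hqM)]
    have e1 : Iic q ∩ Iio lam = Iio lam := by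
      rw [Set.inter_eq_right]; exact fun x (hx : x < lam) => le_trans hx.le hq
    rw [e1]
    simp only [Pi.one_apply, mul_one, mul_zero, add_zero]
    rw [ENNReal.toReal_add hGlam_ne ENNReal.ofReal_ne_top, ENNReal.toReal_ofReal hp0]
  have hFhi : ∀ q, M ≤ q → (Fp G lam M p (Iic q)).toReal = 1 := by
    intro q hq
    simp only [Fp, Measure.coe_add, Pi.add_apply, Measure.smul_apply, smul_eq_mul,
      Measure.restrict_apply measurableSet_Iic,
      Measure.dirac_apply' _ measurableSet_Iic]
    rw [Set.indicator_of_mem (by simpa using le_trans hlamM hq),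
      Set.indicator_of_mem (by simpa using hq)]
    have e1 : Iic q ∩ Iio lam = Iio lam := by
      rw [Set.inter_eq_right]
      exact fun x (hx : x < lam) => le_trans hx.le (le_trans hlamM hq)
    rw [e1]
    simp only [Pi.one_apply, mul_one]
    rw [ENNReal.toReal_add (by finiteness) ENNReal.ofReal_ne_top,
      ENNReal.toReal_add hGlam_ne ENNReal.ofReal_ne_top,
      ENNReal.toReal_ofReal hp0, ENNReal.toReal_ofReal htail0]
    ring
  refine ⟨?_, ?_, ?_⟩
  · -- case ρ ≤ g
    intro hcase
    unfold qStar
    congr 1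
    ext q
    simp only [mem_setOf_eq]
    rcases lt_or_ge q lam with hq | hq
    · rw [hFlt q hq]
    · have h1 : ρ ≤ (Fp G lam M p (Iic q)).toReal := by
        rcases lt_or_ge q M with hqM | hqM
        · rw [hFmid q hq hqM]; linarith
        · rw [hFhi q hqM]; linarith
      have h2 : ρ ≤ (G (Iic q)).toReal := by
        refine le_trans hcase (ENNReal.toReal_mono (measure_ne_top _ _) ?_)
        exact measure_mono (fun x (hx : x < lam) => le_trans hx.le hq)
      simp [h1, h2]
  · -- case g < ρ ≤ g + p
    intro hc1 hc2
    unfold qStar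
    have : {q : ℝ | ρ ≤ (Fp G lam M p (Iic q)).toReal} = Ici lam := by
      ext q
      simp only [mem_setOf_eq, mem_Ici]
      constructor
      · intro hρq
        by_contra hq
        push_neg at hq
        rw [hFlt q hq] at hρq
        have : (G (Iic q)).toReal ≤ g := by
          refine ENNReal.toReal_mono hGlam_ne (measure_mono ?_)
          exact fun x hx => lt_of_le_of_lt hx hq
        linarith
      · intro hq
        rcases lt_or_ge q M with hqM | hqM
        · rw [hFmid q hq hqM]; linarith
        · rw [hFhi q hqM]; linarith
    rw [this, csInf_Ici]
  · -- case g + p < ρ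
    intro hc
    unfold qStar
    have : {q : ℝ | ρ ≤ (Fp G lam M p (Iic q)).toReal} = Ici M := by
      ext q
      simp only [mem_setOf_eq, mem_Ici]
      constructor
      · intro hρq
        by_contra hq
        push_neg at hq
        rcases lt_or_ge q lam with hql | hql
        · rw [hFlt q hql] at hρq
          have : (G (Iic q)).toReal ≤ g := by
            refine ENNReal.toReal_mono hGlam_ne (measure_mono ?_)
            exact fun x hx => lt_of_le_of_lt hx hql
          linarith
        · rw [hFmid q hql hq] at hρq; linarith
      · intro hq
        rw [hFhi q hq]; linarith
    rw [this, csInf_Ici]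
end

section
/- Let ρ ∈ (0,1), λ > 0, and let d_1, …, d_N be nonnegative reals with censored values s_i = min(d_i, λ). If (1/N)·Σ_{i=1}^N 1{s_i < λ} ≥ ρ, then the ρ-th sample quantile of the censored data equals the ρ-th sample quantile of the uncensored data, i.e. inf{x ∈ ℝ : (1/N)·Σ_{i=1}^N 1{s_i ≤ x} ≥ ρ} = inf{x ∈ ℝ : (1/N)·Σ_{i=1}^N 1{d_i ≤ x} ≥ ρ}, and this common value is strictly less than λ. -/
open MeasureTheory Set

/-- if the fraction of censored samples strictly below `λ` is at least `ρ`,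
then the `ρ`-th sample quantile of the censored data equals that of the uncensored data,
and this common value is strictly less than `λ`. -/
theorem stmt13 (N : ℕ) (hN : 1 ≤ N) (ρ : ℝ) (hρ : ρ ∈ Ioo (0 : ℝ) 1)
    (lam : ℝ) (hlam : 0 < lam)
    (d : Fin N → ℝ) (hd : ∀ i, 0 ≤ d i)
    (hfrac : ρ ≤ (1 / (N : ℝ)) * ∑ i, (if min (d i) lam < lam then (1 : ℝ) else 0)) :
    sInf {x : ℝ | ρ ≤ (1 / (N : ℝ)) * ∑ i, (if min (d i) lam ≤ x then (1 : ℝ) else 0)} =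
      sInf {x : ℝ | ρ ≤ (1 / (N : ℝ)) * ∑ i, (if d i ≤ x then (1 : ℝ) else 0)} ∧
    sInf {x : ℝ | ρ ≤ (1 / (N : ℝ)) * ∑ i, (if d i ≤ x then (1 : ℝ) else 0)} < lam := by

  classical
  have hN' : (0:ℝ) < N := by exact_mod_cast hN
  have hNi : (0:ℝ) < 1 / (N:ℝ) := by positivity
  set Ss := {x : ℝ | ρ ≤ (1 / (N : ℝ)) * ∑ i, (if min (d i) lam ≤ x then (1 : ℝ) else 0)} with hSs
  set Sd := {x : ℝ | ρ ≤ (1 / (N : ℝ)) * ∑ i, (if d i ≤ x then (1 : ℝ) else 0)} with hSd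
  -- sums agree below lam
  have hkey : ∀ x, x < lam → (∑ i, (if min (d i) lam ≤ x then (1:ℝ) else 0))
      = ∑ i, (if d i ≤ x then (1:ℝ) else 0) := by
    intro x hx
    refine Finset.sum_congr rfl fun i _ => ?_
    have : min (d i) lam ≤ x ↔ d i ≤ x := by
      constructor
      · intro h
        rcases min_le_iff.mp h with h | h
        · exact h
        · linarith
      · intro h; exact le_trans (min_le_left _ _) h
    simp [this]
  -- there is a sample strictly below lam
  have hpos : 0 < ∑ i, (if min (d i) lam < lam then (1:ℝ) else 0) := by
    have : 0 < (1 / (N:ℝ)) * ∑ i, (if min (d i) lam < lam then (1:ℝ) else 0) :=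
      lt_of_lt_of_le hρ.1 hfrac
    nlinarith
  obtain ⟨j, -, hj⟩ := Finset.exists_ne_zero_of_sum_ne_zero (ne_of_gt hpos)
  have hjlt : d j < lam := by
    by_cases h : min (d j) lam < lam
    · rcases min_lt_iff.mp h with h | h
      · exact h
      · exact absurd h (lt_irrefl _)
    · simp [h] at hj
  -- x0: the max of the samples below lam
  set T : Finset (Fin N) := Finset.univ.filter (fun i => d i < lam) with hT
  have hTne : (T.image d).Nonempty := ⟨d j, Finset.mem_image_of_mem d (by simp [hT, hjlt])⟩
  set x0 : ℝ := (T.image d).max' hTne with hx0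
  have hx0lt : x0 < lam := by
    obtain ⟨i, hi, hdi⟩ := Finset.mem_image.mp ((T.image d).max'_mem hTne)
    have : d i < lam := (Finset.mem_filter.mp hi).2
    show (Finset.image d T).max' hTne < lam
    rw [← hdi]; exact this
  have hle_x0 : ∀ i, d i < lam → d i ≤ x0 := fun i hi =>
    Finset.le_max' _ _ (Finset.mem_image_of_mem d (by simp [hT, hi]))
  -- x0 ∈ Sd
  have hx0Sd : x0 ∈ Sd := by
    rw [hSd]
    refine le_trans hfrac (mul_le_mul_of_nonneg_left ?_ hNi.le)
    refine Finset.sum_le_sum fun i _ => ?_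
    by_cases h : min (d i) lam < lam
    · have hdi : d i < lam := by
        rcases min_lt_iff.mp h with h | h
        · exact h
        · exact absurd h (lt_irrefl _)
      simp [h, hle_x0 i hdi]
    · simp only [h, if_false]
      split <;> norm_num
  have hx0Ss : x0 ∈ Ss := by
    rw [hSs]; show ρ ≤ _
    rw [hkey x0 hx0lt]; exact hx0Sd
  -- boundedness below
  have hbddd : BddBelow Sd := by
    refine ⟨0, fun x hx => ?_⟩
    by_contra hx0'
    push_neg at hx0'
    have : (∑ i, (if d i ≤ x then (1:ℝ) else 0)) = 0 := by
      refine Finset.sum_eq_zero fun i _ => ?_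
      have : ¬ d i ≤ x := by linarith [hd i]
      simp [this]
    rw [hSd] at hx
    simp only [Set.mem_setOf_eq, this, mul_zero] at hx
    linarith [hρ.1]
  have hbdds : BddBelow Ss := by
    refine ⟨0, fun x hx => ?_⟩
    by_contra hx0'
    push_neg at hx0'
    have : (∑ i, (if min (d i) lam ≤ x then (1:ℝ) else 0)) = 0 := by
      refine Finset.sum_eq_zero fun i _ => ?_
      have : ¬ min (d i) lam ≤ x := by
        have : (0:ℝ) ≤ min (d i) lam := le_min (hd i) hlam.le
        linarith
      simp [this]
    rw [hSs] at hx
    simp only [Set.mem_setOf_eq, this, mul_zero] at hx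
    linarith [hρ.1]
  have hdlt : sInf Sd < lam := lt_of_le_of_lt (csInf_le hbddd hx0Sd) hx0lt
  refine ⟨le_antisymm ?_ ?_, hdlt⟩
  · refine le_csInf ⟨x0, hx0Sd⟩ fun b hb => ?_
    by_cases hbl : b < lam
    · have : b ∈ Ss := by
        rw [hSs]; show ρ ≤ _
        rw [hkey b hbl]; exact hb
      exact csInf_le hbdds this
    · push_neg at hbl
      exact le_trans (csInf_le hbdds hx0Ss) (le_trans hx0lt.le hbl)
  · refine le_csInf ⟨x0, hx0Ss⟩ fun b hb => ?_
    by_cases hbl : b < lam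
    · have : b ∈ Sd := by
        rw [hSd]; show ρ ≤ _
        rw [← hkey b hbl]; exact hb
      exact csInf_le hbddd this
    · push_neg at hbl
      exact le_trans (csInf_le hbddd hx0Sd) (le_trans hx0lt.le hbl)
end
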